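/- arXiv:1703.02232 — 2 statements merged into one kernel-verified Lean document; each statement's English description precedes it below -/
import Mathlib

section
/- Let 0 < ν < 1 and 0 < b ≤ ∞. For every measurable function f and every x with 0 < x < b, the right-sided fractional Bessel integral of order 1 has the elementary form (B_{ν,b-}^{-1} f)(x) = (1/(ν−1)) ∫_x^b y ((x/y)^{1−ν} − 1) f(y) dy; in particular, for b = ∞, (B_{ν,-}^{-1} f)(x) = (1/(ν−1)) ∫_x^∞ y ((x/y)^{1−ν} − 1) f(y) dy. -/
open MeasureTheory Real Set Filter

/-- Gauss hypergeometric function ₂F₁(a,b;c;z) as a power series with Pochhammer coefficients. -/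
noncomputable def hyp2F1 (a b c z : ℝ) : ℝ :=
  ∑' k : ℕ, ((ascPochhammer ℝ k).eval a * (ascPochhammer ℝ k).eval b /
    ((ascPochhammer ℝ k).eval c * (k.factorial : ℝ))) * z ^ k

/-- Kernel of the right-sided fractional Bessel integral. -/
noncomputable def besselKernelRight (ν α x y : ℝ) : ℝ :=
  ((y ^ 2 - x ^ 2) / (2 * y)) ^ (2 * α - 1) *
    hyp2F1 (α + (ν - 1) / 2) α (2 * α) (1 - x ^ 2 / y ^ 2)

/-- Right-sided fractional Bessel integral B_{ν,b-}^{-α} f at x, for finite b. -/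
noncomputable def besselRight (ν α x b : ℝ) (f : ℝ → ℝ) : ℝ :=
  (1 / Real.Gamma (2 * α)) * ∫ y in x..b, besselKernelRight ν α x y * f y

/-- Right-sided fractional Bessel integral B_{ν,-}^{-α} f at x (b = ∞). -/
noncomputable def besselRightInf (ν α x : ℝ) (f : ℝ → ℝ) : ℝ :=
  (1 / Real.Gamma (2 * α)) * ∫ y in Set.Ioi x, besselKernelRight ν α x y * f y

/-- Kernel of the left-sided fractional Bessel integral. -/
noncomputable def besselKernelLeft (ν α x y : ℝ) : ℝ :=
  (y / x) ^ ν * ((x ^ 2 - y ^ 2) / (2 * x)) ^ (2 * α - 1) *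
    hyp2F1 (α + (ν - 1) / 2) α (2 * α) (1 - y ^ 2 / x ^ 2)

/-- Left-sided fractional Bessel integral B_{ν,a+}^{-α} f at x. -/
noncomputable def besselLeft (ν α a x : ℝ) (f : ℝ → ℝ) : ℝ :=
  (1 / Real.Gamma (2 * α)) * ∫ y in a..x, besselKernelLeft ν α x y * f y


/-! For `α = 1` the kernel involves `₂F₁(a, 1; 2; z)` with `a = (ν + 1) / 2`. Since
`(1)ₖ / (2)ₖ = 1 / (k + 1)` and `(a - 1)ₖ₊₁ = (a - 1) (a)ₖ`, the series `(a - 1) z ₂F₁(a, 1; 2; z)` is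
the binomial series of `(1 - z) ^ (1 - a)` without its constant term. At `z = 1 - x² / y²` one has
`(1 - z) ^ (1 - a) = (x / y) ^ (1 - ν)`, and the prefactor `(y² - x²) / (2y)` cancels against
`(a - 1) z = (ν - 1) (y² - x²) / (2y²)`. -/

theorem ascPochhammer_eval_div_factorial_eq_choose (s : ℝ) (n : ℕ) :
    (ascPochhammer ℝ n).eval s / n.factorial = Ring.choose (s + n - 1) n := by
  rw [← Ring.multichoose_eq, div_eq_iff (by positivity), mul_comm, ← nsmul_eq_mul,
    Ring.factorial_nsmul_multichoose_eq_ascPochhammer, Polynomial.ascPochhammer_smeval_eq_eval]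

theorem hasSum_ascPochhammer_mul_pow (s : ℝ) {z : ℝ} (hz : |z| < 1) :
    HasSum (fun n : ℕ => (ascPochhammer ℝ n).eval s / n.factorial * z ^ n) ((1 - z) ^ (-s)) := by
  have := (one_div_one_sub_rpow_hasFPowerSeriesOnBall_zero s).hasSum
    (y := z) (by simpa [edist_zero_right, enorm_eq_nnnorm, ← NNReal.coe_lt_one] using hz)
  simpa [FormalMultilinearSeries.ofScalars_apply_eq, ascPochhammer_eval_div_factorial_eq_choose,
    rpow_neg (by linarith [abs_lt.mp hz] : (0:ℝ) ≤ 1 - z), mul_comm] using this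

theorem hyp2F1_one_two {a z : ℝ} (ha : a ≠ 1) (hz₀ : z ≠ 0) (hz : |z| < 1) :
    hyp2F1 a 1 2 z = ((1 - z) ^ (1 - a) - 1) / ((a - 1) * z) := by
  have hc : (a - 1) * z ≠ 0 := mul_ne_zero (sub_ne_zero.mpr ha) hz₀
  have hshift := (hasSum_nat_add_iff' 1).mpr (hasSum_ascPochhammer_mul_pow (a - 1) hz)
  have hterm (k : ℕ) : (ascPochhammer ℝ (k + 1)).eval (a - 1) / (k + 1).factorial * z ^ (k + 1) =
      (ascPochhammer ℝ k).eval a * (ascPochhammer ℝ k).eval 1 /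
        ((ascPochhammer ℝ k).eval 2 * k.factorial) * z ^ k * ((a - 1) * z) := by
    have h2 := factorial_mul_ascPochhammer ℝ 1 k
    simp only [ascPochhammer_succ_left, Polynomial.eval_mul, Polynomial.eval_X,
      Polynomial.eval_comp, Polynomial.eval_add, Polynomial.eval_one, sub_add_cancel,
      ascPochhammer_eval_one] at h2 ⊢
    norm_num at h2
    rw [h2, add_comm 1 k]
    field_simp
    ring
  simp only [hterm, Finset.range_one, Finset.sum_singleton, ascPochhammer_zero, Polynomial.eval_one,
    Nat.factorial_zero, Nat.cast_one, div_one, pow_zero, mul_one, neg_sub] at hshift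
  rw [← div_mul_cancel₀ ((1 - z) ^ (1 - a) - 1) hc] at hshift
  exact ((hasSum_mul_right_iff hc).mp hshift).tsum_eq

theorem besselKernelRight_one {ν x y : ℝ} (hν : ν ≠ 1) (hx : 0 < x) (hxy : x < y) :
    besselKernelRight ν 1 x y = 1 / (ν - 1) * (y * ((x / y) ^ (1 - ν) - 1)) := by
  have hy : 0 < y := hx.trans hxy
  have hq₀ : 0 < x ^ 2 / y ^ 2 := by positivity
  have hq₁ : x ^ 2 / y ^ 2 < 1 := (div_lt_one (by positivity)).mpr (by nlinarith)
  have hz : |1 - x ^ 2 / y ^ 2| < 1 := abs_lt.mpr ⟨by linarith, by linarith⟩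
  have hpow : (1 - (1 - x ^ 2 / y ^ 2)) ^ (1 - (1 + (ν - 1) / 2)) = (x / y) ^ (1 - ν) := by
    rw [sub_sub_cancel, ← div_pow, ← rpow_natCast, ← rpow_mul (by positivity)]
    congr 1
    push_cast
    ring
  have ha : 1 + (ν - 1) / 2 ≠ 1 := by contrapose! hν; linarith
  rw [besselKernelRight, mul_one, hyp2F1_one_two ha (by linarith) hz, hpow]
  have : ν - 1 ≠ 0 := sub_ne_zero.mpr hν
  have : y ^ 2 - x ^ 2 ≠ 0 := by nlinarith
  norm_num
  field_simp

theorem statement7_general (ν : ℝ) (hν1 : ν < 1)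
    (f : ℝ → ℝ) (x : ℝ) (hx : 0 < x) :
    (∀ b : ℝ, x < b →
      besselRight ν 1 x b f =
        1 / (ν - 1) * ∫ y in x..b, y * ((x / y) ^ (1 - ν) - 1) * f y) ∧
    besselRightInf ν 1 x f =
      1 / (ν - 1) * ∫ y in Set.Ioi x, y * ((x / y) ^ (1 - ν) - 1) * f y := by
  have hΓ : 1 / Gamma (2 * 1) = 1 := by norm_num [Gamma_two]
  have hkernel : ∀ y ∈ Ioi x, besselKernelRight ν 1 x y * f y =
      1 / (ν - 1) * (y * ((x / y) ^ (1 - ν) - 1) * f y) := fun y hy => by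
    rw [besselKernelRight_one hν1.ne hx hy, mul_assoc]
  refine ⟨fun b hb => ?_, ?_⟩
  · rw [besselRight, hΓ, one_mul, intervalIntegral.integral_of_le hb.le,
      intervalIntegral.integral_of_le hb.le, ← integral_const_mul]
    exact setIntegral_congr_fun measurableSet_Ioc fun y hy => hkernel y hy.1
  · rw [besselRightInf, hΓ, one_mul, ← integral_const_mul]
    exact setIntegral_congr_fun measurableSet_Ioi hkernel

theorem statement7 (ν : ℝ) (hν : 0 < ν) (hν1 : ν < 1)
    (f : ℝ → ℝ) (hf : Measurable f) (x : ℝ) (hx : 0 < x) :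
    (∀ b : ℝ, x < b →
      besselRight ν 1 x b f =
        1 / (ν - 1) * ∫ y in x..b, y * ((x / y) ^ (1 - ν) - 1) * f y) ∧
    besselRightInf ν 1 x f =
      1 / (ν - 1) * ∫ y in Set.Ioi x, y * ((x / y) ^ (1 - ν) - 1) * f y :=
  statement7_general ν hν1 f x hx
end

section
/- Let ν ≥ 0 and α > 0, and let f, g be measurable functions on (0,∞) such that the double integral ∫_0^∞ ∫_0^x |f(x)| y^ν ((x²−y²)/(2x))^{2α−1} |₂F₁(α+(ν−1)/2, α; 2α; 1−y²/x²)| |g(y)| dy dx is finite. Then the integration-by-parts formula holds: ∫_0^∞ f(x) (B_{ν,0+}^{-α} g)(x) x^ν dx = ∫_0^∞ g(x) (B_{ν,-}^{-α} f)(x) x^ν dx. -/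
open MeasureTheory Real Set Filter

/-! Fubini on the triangle `0 < y < x`. The integrand `f(x) y^ν K_right(y, x) g(y)` is integrable
there, its absolute value being the integrand assumed integrable, and the kernel identity
`x^ν K_left(x, y) = y^ν K_right(y, x)` turns its two iterated integrals into the two sides. -/

lemma measurable_hyp2F1 (a b c : ℝ) : Measurable (hyp2F1 a b c) := by
  unfold hyp2F1
  exact (StronglyMeasurable.tsum fun k =>
    (continuous_const.mul (continuous_pow k)).stronglyMeasurable).measurable

lemma measurable_besselKernelRight (ν α : ℝ) :
    Measurable fun p : ℝ × ℝ => besselKernelRight ν α p.1 p.2 := by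
  have := measurable_hyp2F1 (α + (ν - 1) / 2) α (2 * α)
  unfold besselKernelRight
  fun_prop

theorem integral_Ioi_integral_Ioo_comm {E : Type*} [NormedAddCommGroup E] [NormedSpace ℝ E]
    {μ ν : Measure ℝ} [SFinite μ] [SFinite ν] {H : ℝ × ℝ → E}
    (hH : IntegrableOn H {p | 0 < p.2 ∧ p.2 < p.1} (μ.prod ν)) :
    ∫ x in Ioi 0, ∫ y in Ioo 0 x, H (x, y) ∂ν ∂μ = ∫ y in Ioi 0, ∫ x in Ioi y, H (x, y) ∂μ ∂ν := by
  set T : Set (ℝ × ℝ) := {p | 0 < p.2 ∧ p.2 < p.1}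
  have hT : MeasurableSet T := by measurability
  have hG : Integrable (T.indicator H) (μ.prod ν) := (integrable_indicator_iff hT).2 hH
  have hrow (x : ℝ) : ∫ y, T.indicator H (x, y) ∂ν = ∫ y in Ioo 0 x, H (x, y) ∂ν := by
    rw [← integral_indicator measurableSet_Ioo]
    rfl
  have hcol (y : ℝ) (hy : 0 < y) : ∫ x, T.indicator H (x, y) ∂μ = ∫ x in Ioi y, H (x, y) ∂μ := by
    rw [← integral_indicator measurableSet_Ioi]
    congr 1 with x
    simp [T, Set.indicator, hy]
  calc ∫ x in Ioi 0, ∫ y in Ioo 0 x, H (x, y) ∂ν ∂μ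
      = ∫ x, ∫ y, T.indicator H (x, y) ∂ν ∂μ := by
        simp_rw [hrow]
        refine setIntegral_eq_integral_of_forall_compl_eq_zero fun x hx => ?_
        rw [Ioo_eq_empty (by simpa using hx), Measure.restrict_empty, integral_zero_measure]
    _ = ∫ y, ∫ x, T.indicator H (x, y) ∂μ ∂ν := integral_integral_swap hG
    _ = ∫ y in Ioi 0, ∫ x in Ioi y, H (x, y) ∂μ ∂ν := by
        rw [← setIntegral_eq_integral_of_forall_compl_eq_zero fun y hy => ?_]
        · exact setIntegral_congr_fun measurableSet_Ioi hcol
        · simp [T, Set.indicator, show ¬ 0 < y from hy]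

lemma rpow_mul_besselKernelLeft (ν α : ℝ) {x y : ℝ} (hx : 0 < x) (hy : 0 ≤ y) :
    x ^ ν * besselKernelLeft ν α x y = y ^ ν * besselKernelRight ν α y x := by
  have hxν : x ^ ν ≠ 0 := (rpow_pos_of_pos hx ν).ne'
  rw [besselKernelLeft, besselKernelRight, div_rpow hy hx.le]
  field_simp

noncomputable def besselDoubleIntegrand (ν α : ℝ) (f g : ℝ → ℝ) (p : ℝ × ℝ) : ℝ :=
  f p.1 * p.2 ^ ν * besselKernelRight ν α p.2 p.1 * g p.2

lemma norm_besselDoubleIntegrand (ν α : ℝ) (f g : ℝ → ℝ) {x y : ℝ} (hy : 0 ≤ y) (hyx : y ≤ x) :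
    ‖besselDoubleIntegrand ν α f g (x, y)‖ = |f x| * y ^ ν *
      ((x ^ 2 - y ^ 2) / (2 * x)) ^ (2 * α - 1) *
      |hyp2F1 (α + (ν - 1) / 2) α (2 * α) (1 - y ^ 2 / x ^ 2)| * |g y| := by
  have hbase : 0 ≤ (x ^ 2 - y ^ 2) / (2 * x) := div_nonneg (by nlinarith) (by linarith)
  simp only [besselDoubleIntegrand, besselKernelRight, norm_mul, Real.norm_eq_abs,
    abs_of_nonneg (rpow_nonneg hy ν), abs_of_nonneg (rpow_nonneg hbase _)]
  ring

lemma integrableOn_besselDoubleIntegrand {ν α : ℝ} {f g : ℝ → ℝ}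
    (hf : Measurable f) (hg : Measurable g)
    (hint : IntegrableOn
      (fun p : ℝ × ℝ => |f p.1| * p.2 ^ ν *
        ((p.1 ^ 2 - p.2 ^ 2) / (2 * p.1)) ^ (2 * α - 1) *
        |hyp2F1 (α + (ν - 1) / 2) α (2 * α) (1 - p.2 ^ 2 / p.1 ^ 2)| * |g p.2|)
      {p : ℝ × ℝ | 0 < p.2 ∧ p.2 < p.1}) :
    IntegrableOn (besselDoubleIntegrand ν α f g) {p : ℝ × ℝ | 0 < p.2 ∧ p.2 < p.1}
      ((volume : Measure ℝ).prod volume) := by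
  have hT : MeasurableSet {p : ℝ × ℝ | 0 < p.2 ∧ p.2 < p.1} := by measurability
  have hmeas : Measurable (besselDoubleIntegrand ν α f g) := by
    have := measurable_besselKernelRight ν α
    unfold besselDoubleIntegrand
    fun_prop
  refine hint.mono' hmeas.aestronglyMeasurable ((ae_restrict_iff' hT).2 (ae_of_all _ ?_))
  rintro ⟨x, y⟩ ⟨hy, hyx⟩
  exact (norm_besselDoubleIntegrand ν α f g hy.le hyx.le).le

lemma mul_besselLeft_zero_mul_rpow (ν α : ℝ) (f g : ℝ → ℝ) {x : ℝ} (hx : 0 < x) :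
    f x * besselLeft ν α 0 x g * x ^ ν =
      1 / Gamma (2 * α) * ∫ y in Ioo 0 x, besselDoubleIntegrand ν α f g (x, y) := by
  have hkernel : ∀ y ∈ Ioo 0 x, besselDoubleIntegrand ν α f g (x, y) =
      f x * x ^ ν * (besselKernelLeft ν α x y * g y) := fun y hy => by
    rw [besselDoubleIntegrand, mul_assoc (f x), ← rpow_mul_besselKernelLeft ν α hx hy.1.le]
    ring
  rw [setIntegral_congr_fun measurableSet_Ioo hkernel, integral_const_mul, besselLeft,
    intervalIntegral.integral_of_le hx.le, integral_Ioc_eq_integral_Ioo]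
  ring

lemma mul_besselRightInf_mul_rpow (ν α : ℝ) (f g : ℝ → ℝ) (y : ℝ) :
    g y * besselRightInf ν α y f * y ^ ν =
      1 / Gamma (2 * α) * ∫ x in Ioi y, besselDoubleIntegrand ν α f g (x, y) := by
  have hkernel : (fun x => besselDoubleIntegrand ν α f g (x, y)) =
      fun x => g y * y ^ ν * (besselKernelRight ν α y x * f x) := by
    funext x
    rw [besselDoubleIntegrand]
    ring
  rw [hkernel, integral_const_mul, besselRightInf]
  ring

theorem statement14_general (ν α : ℝ)
    (f g : ℝ → ℝ) (hf : Measurable f) (hg : Measurable g)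
    (hint : MeasureTheory.IntegrableOn
      (fun p : ℝ × ℝ => |f p.1| * p.2 ^ ν *
        ((p.1 ^ 2 - p.2 ^ 2) / (2 * p.1)) ^ (2 * α - 1) *
        |hyp2F1 (α + (ν - 1) / 2) α (2 * α) (1 - p.2 ^ 2 / p.1 ^ 2)| * |g p.2|)
      {p : ℝ × ℝ | 0 < p.2 ∧ p.2 < p.1}) :
    ∫ x in Set.Ioi (0 : ℝ), f x * besselLeft ν α 0 x g * x ^ ν =
      ∫ x in Set.Ioi (0 : ℝ), g x * besselRightInf ν α x f * x ^ ν := by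
  rw [setIntegral_congr_fun measurableSet_Ioi fun x hx => mul_besselLeft_zero_mul_rpow ν α f g hx,
    setIntegral_congr_fun measurableSet_Ioi fun y _ => mul_besselRightInf_mul_rpow ν α f g y,
    integral_const_mul, integral_const_mul,
    integral_Ioi_integral_Ioo_comm (integrableOn_besselDoubleIntegrand hf hg hint)]

theorem statement14 (ν α : ℝ) (hν : 0 ≤ ν) (hα : 0 < α)
    (f g : ℝ → ℝ) (hf : Measurable f) (hg : Measurable g)
    (hint : MeasureTheory.IntegrableOn
      (fun p : ℝ × ℝ => |f p.1| * p.2 ^ ν *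
        ((p.1 ^ 2 - p.2 ^ 2) / (2 * p.1)) ^ (2 * α - 1) *
        |hyp2F1 (α + (ν - 1) / 2) α (2 * α) (1 - p.2 ^ 2 / p.1 ^ 2)| * |g p.2|)
      {p : ℝ × ℝ | 0 < p.2 ∧ p.2 < p.1}) :
    ∫ x in Set.Ioi (0 : ℝ), f x * besselLeft ν α 0 x g * x ^ ν =
      ∫ x in Set.Ioi (0 : ℝ), g x * besselRightInf ν α x f * x ^ ν :=
  statement14_general ν α f g hf hg hint
end
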